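/- Let g : ℝ → ℝ be a continuous, everywhere positive probability density with CDF G(x) = ∫_{−∞}^{x} g(t) dt, ∫_ℝ g = 1, mean μ₀ = ∫_ℝ x·g(x) dx, and μ₀ > 0. Let q ∈ (0,1) and r > r₀ > 0, and set s := r₀μ₀/r. For β ∈ (0,1) define x̲_β(v) = 2s/(1+q) − ((1−q)/(1+q))·v, let x̄(β) be the unique zero in (s, μ₀) of R_β(v) = β·∫_{x̲_β(v)}^{v} (G(x) − G(x̲_β(v))) dx − (1−β)·(μ₀ − v), and let x̲(β) = x̲_β(x̄(β)). Then for all β₁ < β₂ in (0,1): x̄(β₁) > x̄(β₂) and x̲(β₁) < x̲(β₂). -/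

import Mathlib

open MeasureTheory Set

/-!
On an equilibrium, `β · I(x̄) = (1 - β) · (μ₀ - x̄)`, where `I(v) = ∫_{x̲(v)}^{v} (G - G(x̲(v)))`.
Since `G` is nondecreasing and `x̲` is decreasing with `x̲(v) < v`, the interval of integration
and the integrand of `I` both grow with `v`, so `I` is nondecreasing, while `μ₀ - v` decreases
and `(1 - β) / β` strictly decreases in `β`. Hence `x̄(β₁) ≤ x̄(β₂)` for `β₁ < β₂` is impossible,
and `x̲` reverses the resulting inequality.
-/

theorem monotone_setIntegral_Iic {μ : Measure ℝ} {f : ℝ → ℝ} (hf : 0 ≤ f)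
    (hfi : Integrable f μ) : Monotone fun x => ∫ t in Iic x, f t ∂μ :=
  fun _ _ hxy => setIntegral_mono_set hfi.integrableOn (Filter.Eventually.of_forall hf)
    (Iic_subset_Iic.mpr hxy).eventuallyLE

theorem Monotone.intervalIntegral_sub_left_le {f : ℝ → ℝ} (hf : Monotone f) {a a' b b' : ℝ}
    (ha : a ≤ a') (hab : a' ≤ b) (hb : b ≤ b') :
    ∫ x in a'..b, (f x - f a') ≤ ∫ x in a..b', (f x - f a) := by
  have hint : ∀ c u v, IntervalIntegrable (fun x => f x - f c) volume u v :=
    fun _ _ _ => hf.intervalIntegrable.sub intervalIntegrable_const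
  have h_nonneg : ∀ u v, a ≤ u → u ≤ v → 0 ≤ ∫ x in u..v, (f x - f a) := fun u v hu huv =>
    intervalIntegral.integral_nonneg huv fun x hx => sub_nonneg.mpr (hf (hu.trans hx.1))
  have h_lower : ∫ x in a'..b, (f x - f a') ≤ ∫ x in a'..b, (f x - f a) :=
    intervalIntegral.integral_mono_on hab (hint _ _ _) (hint _ _ _) fun x _ =>
      sub_le_sub_left (hf ha) _
  rw [← intervalIntegral.integral_add_adjacent_intervals (hint a a a') (hint a a' b'),
    ← intervalIntegral.integral_add_adjacent_intervals (hint a a' b) (hint a b b')]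
  linarith [h_nonneg a a' le_rfl ha, h_nonneg b b' (ha.trans hab) hb]

theorem lt_of_mul_eq_one_sub_mul {β₁ β₂ I₁ I₂ d₁ d₂ : ℝ} (hβ₁ : 0 < β₁) (hβ₂ : β₂ < 1)
    (hββ : β₁ < β₂) (hd₂ : 0 < d₂) (hd : d₂ ≤ d₁)
    (h₁ : β₁ * I₁ = (1 - β₁) * d₁) (h₂ : β₂ * I₂ = (1 - β₂) * d₂) : I₂ < I₁ := by
  have hβ₂pos : 0 < β₂ := hβ₁.trans hββ
  have h_weight : (1 - β₂) / β₂ < (1 - β₁) / β₁ := by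
    rw [div_lt_div_iff₀ hβ₂pos hβ₁]; nlinarith
  calc I₂ = (1 - β₂) / β₂ * d₂ := by field_simp; linarith
    _ < (1 - β₁) / β₁ * d₂ := mul_lt_mul_of_pos_right h_weight hd₂
    _ ≤ (1 - β₁) / β₁ * d₁ := mul_le_mul_of_nonneg_left hd (div_nonneg (by linarith) hβ₁.le)
    _ = I₁ := by field_simp; linarith

section Threshold

variable {s q : ℝ}

theorem strictAnti_affine_threshold (hq : q ∈ Ioo (0 : ℝ) 1) :
    StrictAnti fun v : ℝ => 2 * s / (1 + q) - ((1 - q) / (1 + q)) * v := by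
  have h_slope : 0 < (1 - q) / (1 + q) := div_pos (by linarith [hq.2]) (by linarith [hq.1])
  exact fun _ _ h => sub_lt_sub_left (mul_lt_mul_of_pos_left h h_slope) _

theorem affine_threshold_lt (hq : q ∈ Ioo (0 : ℝ) 1) {v : ℝ} (hv : s < v) :
    2 * s / (1 + q) - ((1 - q) / (1 + q)) * v < v := by
  have h1q : 0 < 1 + q := by linarith [hq.1]
  rw [div_mul_eq_mul_div, ← sub_div, div_lt_iff₀ h1q]
  linarith

end Threshold

theorem stmt_12_general (g : ℝ → ℝ) (hg_pos : ∀ x, 0 < g x)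
    (hg_one : (∫ x, g x) = 1)
    (μ₀ : ℝ)
    (G : ℝ → ℝ) (hG : ∀ x, G x = ∫ t in Iic x, g t)
    (q : ℝ) (hq : q ∈ Set.Ioo (0 : ℝ) 1)
    (s : ℝ)
    (xlow : ℝ → ℝ) (hxlow : ∀ v, xlow v = 2 * s / (1 + q) - ((1 - q) / (1 + q)) * v)
    (R : ℝ → ℝ → ℝ)
    (hR : ∀ β v, R β v
      = β * (∫ x in (xlow v)..v, (G x - G (xlow v))) - (1 - β) * (μ₀ - v))
    (β₁ β₂ : ℝ) (hβ₁ : β₁ ∈ Set.Ioo (0 : ℝ) 1) (hβ₂ : β₂ ∈ Set.Ioo (0 : ℝ) 1)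
    (hββ : β₁ < β₂)
    (xu₁ xu₂ : ℝ) (hxu₁ : xu₁ ∈ Set.Ioo s μ₀) (hxu₂ : xu₂ ∈ Set.Ioo s μ₀)
    (hz₁ : R β₁ xu₁ = 0) (hz₂ : R β₂ xu₂ = 0) :
    xu₂ < xu₁ ∧ xlow xu₁ < xlow xu₂ := by
  have hG_mono : Monotone G := by
    rw [funext hG]
    exact monotone_setIntegral_Iic (fun x => (hg_pos x).le) (integrable_of_integral_eq_one hg_one)
  have hxlow_anti : StrictAnti xlow := funext hxlow ▸ strictAnti_affine_threshold hq
  have hu_lt : xu₂ < xu₁ := by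
    by_contra! hle
    have hI := hG_mono.intervalIntegral_sub_left_le (hxlow_anti.antitone hle)
      ((hxlow xu₁).trans_lt (affine_threshold_lt hq hxu₁.1)).le hle
    rw [hR] at hz₁ hz₂
    refine (lt_of_mul_eq_one_sub_mul hβ₁.1 hβ₂.2 hββ (sub_pos.mpr hxu₂.2)
      (sub_le_sub_left hle μ₀) ?_ ?_).not_ge hI <;> linarith
  exact ⟨hu_lt, hxlow_anti hu_lt⟩

/-- Part 1 of Proposition 4 (case `r > r₀`): the equilibrium disclosure thresholds satisfy
`∂x̄/∂β < 0` and `∂x̲/∂β > 0`, i.e. the elaborateness of reports increases with the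
investor's competence `β`. -/
theorem stmt_12 (g : ℝ → ℝ) (hg_cont : Continuous g) (hg_pos : ∀ x, 0 < g x)
    (hg_one : (∫ x, g x) = 1)
    (hxg_int : Integrable (fun x => x * g x))
    (μ₀ : ℝ) (hμ₀ : μ₀ = ∫ x, x * g x) (hμ₀pos : 0 < μ₀)
    (G : ℝ → ℝ) (hG : ∀ x, G x = ∫ t in Iic x, g t)
    (q : ℝ) (hq : q ∈ Set.Ioo (0 : ℝ) 1)
    (r r₀ : ℝ) (hr₀ : 0 < r₀) (hrr₀ : r₀ < r)
    (s : ℝ) (hs : s = r₀ * μ₀ / r)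
    (xlow : ℝ → ℝ) (hxlow : ∀ v, xlow v = 2 * s / (1 + q) - ((1 - q) / (1 + q)) * v)
    (R : ℝ → ℝ → ℝ)
    (hR : ∀ β v, R β v
      = β * (∫ x in (xlow v)..v, (G x - G (xlow v))) - (1 - β) * (μ₀ - v))
    (β₁ β₂ : ℝ) (hβ₁ : β₁ ∈ Set.Ioo (0 : ℝ) 1) (hβ₂ : β₂ ∈ Set.Ioo (0 : ℝ) 1)
    (hββ : β₁ < β₂)
    (xu₁ xu₂ : ℝ) (hxu₁ : xu₁ ∈ Set.Ioo s μ₀) (hxu₂ : xu₂ ∈ Set.Ioo s μ₀)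
    (hz₁ : R β₁ xu₁ = 0) (hz₂ : R β₂ xu₂ = 0) :
    xu₂ < xu₁ ∧ xlow xu₁ < xlow xu₂ :=
  stmt_12_general g hg_pos hg_one μ₀ G hG q hq s xlow hxlow R hR β₁ β₂ hβ₁ hβ₂ hββ xu₁ xu₂ hxu₁ hxu₂
    hz₁ hz₂
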